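/- arXiv:1509.01595 — 5 statements merged into one kernel-verified Lean document; each statement's English description precedes it below -/
import Mathlib

section
/- With α = arccos(1/(2√3)) − π/6 and β = α + π/3, and u a unit vector in ℝ², the seven vectors u, r_α(u), r_{−α}(u), r_β(u), r_{−β}(u), r_α(u) − r_β(u), and r_{−α}(u) − r_{−β}(u) all have Euclidean norm 1. -/
noncomputable def rot (θ : ℝ) (u : ℂ) : ℂ := Complex.exp (θ * Complex.I) * u
noncomputable def angA : ℝ := Real.arccos (1 / (2 * Real.sqrt 3)) - Real.pi / 6
noncomputable def angB : ℝ := angA + Real.pi / 3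

/-!
Rotations preserve the norm, and two rotations of `u` by angles differing by `x` are the
endpoints of a chord of length `2 |sin (x / 2)| ‖u‖`. Only `β - α = π / 3` matters, which
gives chord length `2 sin (π / 6) = 1`.
-/

open Complex

lemma norm_rot (θ : ℝ) (u : ℂ) : ‖rot θ u‖ = ‖u‖ := by
  simp [rot, norm_exp_ofReal_mul_I]

lemma rot_sub_rot (a b : ℝ) (u : ℂ) :
    rot a u - rot b u = (exp (I * ↑(a - b)) - 1) * rot b u := by
  simp only [rot, ofReal_sub, sub_mul, one_mul, ← mul_assoc, ← exp_add]
  ring_nf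

lemma norm_rot_sub_rot (a b : ℝ) (u : ℂ) :
    ‖rot a u - rot b u‖ = |2 * Real.sin ((a - b) / 2)| * ‖u‖ := by
  rw [rot_sub_rot, norm_mul, norm_exp_I_mul_ofReal_sub_one, norm_rot, Real.norm_eq_abs]

lemma norm_rot_sub_rot_of_sub_eq_pi_div_three {a b : ℝ} (h : a - b = Real.pi / 3) (u : ℂ) :
    ‖rot a u - rot b u‖ = ‖u‖ := by
  rw [norm_rot_sub_rot, h, div_div, show Real.pi / (3 * 2) = Real.pi / 6 by ring,
    Real.sin_pi_div_six]
  norm_num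

theorem stmt1 (u : ℂ) (hu : ‖u‖ = 1) :
    ‖u‖ = 1 ∧ ‖rot angA u‖ = 1 ∧ ‖rot (-angA) u‖ = 1 ∧ ‖rot angB u‖ = 1 ∧
    ‖rot (-angB) u‖ = 1 ∧ ‖rot angA u - rot angB u‖ = 1 ∧
    ‖rot (-angA) u - rot (-angB) u‖ = 1 := by
  simp only [norm_rot, hu, true_and]
  constructor
  · rw [norm_sub_rev, norm_rot_sub_rot_of_sub_eq_pi_div_three (by simp [angB]), hu]
  · rw [norm_rot_sub_rot_of_sub_eq_pi_div_three (by simp only [angB]; ring), hu]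
end

section
/- The four vectors r_α(u), r_{−α}(u), r_β(u), r_{−β}(u) are linearly independent over ℤ (i.e., if a·r_α(u) + b·r_{−α}(u) + c·r_β(u) + d·r_{−β}(u) = 0 with a,b,c,d ∈ ℤ, then a = b = c = d = 0), where u is any unit vector in ℝ², α = arccos(1/(2√3)) − π/6, and β = α + π/3. -/
open Real

lemma Irrational.eq_zero_of_intCast_mul_add_intCast {x : ℝ} (hx : Irrational x) {k m : ℤ}
    (h : (k : ℝ) * x + m = 0) : k = 0 ∧ m = 0 := by
  have hk : k = 0 := by
    by_contra hk
    exact ((hx.intCast_mul hk).add_intCast m).ne_int 0 (by rw [h]; norm_num)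
  subst hk
  exact ⟨rfl, by exact_mod_cast (by simpa using h : (m : ℝ) = 0)⟩

lemma irrational_sqrt_thirtyThree : Irrational √33 := by
  have : ¬IsSquare 33 := by decide +kernel
  exact_mod_cast irrational_sqrt_natCast_iff.mpr this

lemma Complex.ofReal_mul_exp_add_ofReal_mul_exp_neg (x y θ : ℝ) :
    x * exp (θ * I) + y * exp ((-θ : ℝ) * I) =
      ((x + y) * Real.cos θ : ℝ) + ((x - y) * Real.sin θ : ℝ) * I := by
  simp only [exp_mul_I, ← ofReal_cos, ← ofReal_sin, Real.cos_neg, Real.sin_neg]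
  push_cast
  ring

lemma cos_arccos_one_div_two_sqrt_three : cos (arccos (1 / (2 * √3))) = √3 / 6 := by
  have h3 : √3 * √3 = 3 := mul_self_sqrt (by norm_num)
  have hx : 1 / (2 * √3) = √3 / 6 := by
    field_simp
    linarith
  have hpos : 0 ≤ √3 / 6 := by positivity
  rw [hx, cos_arccos (by linarith) (by nlinarith)]

lemma sin_arccos_one_div_two_sqrt_three : sin (arccos (1 / (2 * √3))) = √33 / 6 := by
  have hsq : 1 - (1 / (2 * √3)) ^ 2 = 33 / 6 ^ 2 := by
    rw [div_pow, mul_pow, sq_sqrt (by norm_num)]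
    norm_num
  rw [sin_arccos, hsq, sqrt_div' _ (by norm_num), sqrt_sq (by norm_num)]

lemma sqrt_three_mul_sqrt_eleven : √3 * √11 = √33 := by
  rw [← sqrt_mul (by norm_num)]
  norm_num

lemma sqrt_thirtyThree_mul_sqrt_three : √33 * √3 = 3 * √11 := by
  rw [← sqrt_three_mul_sqrt_eleven]
  linear_combination √11 * mul_self_sqrt (by norm_num : (0 : ℝ) ≤ 3)

lemma cos_angA : cos angA = 1 / 4 + √33 / 12 := by
  rw [angA, cos_sub, cos_arccos_one_div_two_sqrt_three, sin_arccos_one_div_two_sqrt_three,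
    cos_pi_div_six, sin_pi_div_six]
  linear_combination (1 / 12) * mul_self_sqrt (by norm_num : (0 : ℝ) ≤ 3)

lemma sin_angA : sin angA = √11 / 4 - √3 / 12 := by
  rw [angA, sin_sub, cos_arccos_one_div_two_sqrt_three, sin_arccos_one_div_two_sqrt_three,
    cos_pi_div_six, sin_pi_div_six]
  linear_combination (1 / 12) * sqrt_thirtyThree_mul_sqrt_three

lemma cos_angB : cos angB = 1 / 4 - √33 / 12 := by
  rw [angB, cos_add, cos_angA, sin_angA, cos_pi_div_three, sin_pi_div_three]
  linear_combination
    (1 / 24) * mul_self_sqrt (by norm_num : (0 : ℝ) ≤ 3) - (1 / 8) * sqrt_three_mul_sqrt_eleven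

lemma sin_angB : sin angB = √11 / 4 + √3 / 12 := by
  rw [angB, sin_add, cos_angA, sin_angA, cos_pi_div_three, sin_pi_div_three]
  linear_combination (1 / 24) * sqrt_thirtyThree_mul_sqrt_three

lemma eq_zero_of_intCast_mul_cos_angA_add_intCast_mul_cos_angB {p q : ℤ}
    (h : p * cos angA + q * cos angB = 0) : p = 0 ∧ q = 0 := by
  obtain ⟨hdiff, hsum⟩ := irrational_sqrt_thirtyThree.eq_zero_of_intCast_mul_add_intCast
    (k := p - q) (m := 3 * (p + q)) (by
      rw [cos_angA, cos_angB] at h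
      push_cast
      linear_combination 12 * h)
  omega

lemma eq_zero_of_intCast_mul_sin_angA_add_intCast_mul_sin_angB {p q : ℤ}
    (h : p * sin angA + q * sin angB = 0) : p = 0 ∧ q = 0 := by
  obtain ⟨hsum, hdiff⟩ := irrational_sqrt_thirtyThree.eq_zero_of_intCast_mul_add_intCast
    (k := 3 * (p + q)) (m := 3 * (q - p)) (by
      rw [sin_angA, sin_angB] at h
      push_cast
      linear_combination 12 * √3 * h - 3 * (p + q : ℝ) * sqrt_three_mul_sqrt_eleven
        - (q - p : ℝ) * mul_self_sqrt (by norm_num : (0 : ℝ) ≤ 3))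
  omega

theorem stmt2 (u : ℂ) (hu : ‖u‖ = 1) (a b c d : ℤ)
    (h : (a : ℂ) * rot angA u + (b : ℂ) * rot (-angA) u + (c : ℂ) * rot angB u +
      (d : ℂ) * rot (-angB) u = 0) :
    a = 0 ∧ b = 0 ∧ c = 0 ∧ d = 0 := by
  open Complex in
  have hparts : (⟨(a + b : ℤ) * Real.cos angA + (c + d : ℤ) * Real.cos angB,
      (a - b : ℤ) * Real.sin angA + (c - d : ℤ) * Real.sin angB⟩ : ℂ) = 0 := by
    have hu0 : u ≠ 0 := norm_ne_zero_iff.mp (by rw [hu]; exact one_ne_zero)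
    refine (mul_eq_zero.mp ?_).resolve_right hu0
    have hA := ofReal_mul_exp_add_ofReal_mul_exp_neg a b angA
    have hB := ofReal_mul_exp_add_ofReal_mul_exp_neg c d angB
    rw [← h, mk_eq_add_mul_I]
    simp only [rot]
    push_cast at hA hB ⊢
    linear_combination -u * (hA + hB)
  obtain ⟨hre, him⟩ := Complex.ext_iff.mp hparts
  obtain ⟨hab_add, hcd_add⟩ := eq_zero_of_intCast_mul_cos_angA_add_intCast_mul_cos_angB hre
  obtain ⟨hab_sub, hcd_sub⟩ := eq_zero_of_intCast_mul_sin_angA_add_intCast_mul_sin_angB him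
  omega
end

section
/- With u a unit vector in ℝ², α = arccos(1/(2√3)) − π/6 and β = α + π/3, u lies in the ℤ-span of {r_α(u), r_{−α}(u), r_β(u), r_{−β}(u)}, i.e. u can be written as an integer linear combination of these four vectors. -/
lemma cos_sum : Real.cos angA + Real.cos angB = 1 / 2 := by
  have hB : angB = Real.arccos (1 / (2 * Real.sqrt 3)) + Real.pi / 6 := by
    unfold angB angA; ring
  have hA : angA = Real.arccos (1 / (2 * Real.sqrt 3)) - Real.pi / 6 := rfl
  have h3 : Real.sqrt 3 > 0 := Real.sqrt_pos.mpr (by norm_num)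
  have hc : Real.cos (Real.arccos (1 / (2 * Real.sqrt 3))) = 1 / (2 * Real.sqrt 3) := by
    apply Real.cos_arccos
    · have : (0:ℝ) ≤ 1 / (2 * Real.sqrt 3) := by positivity
      linarith
    · rw [div_le_one (by positivity)]
      nlinarith [Real.mul_self_sqrt (show (0:ℝ) ≤ 3 by norm_num)]
  rw [hA, hB, Real.cos_sub, Real.cos_add, hc, Real.cos_pi_div_six]
  have hs : Real.sqrt 3 * Real.sqrt 3 = 3 := Real.mul_self_sqrt (by norm_num)
  field_simp
  nlinarith

theorem stmt3 (u : ℂ) (hu : ‖u‖ = 1) :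
    ∃ a b c d : ℤ, u = (a : ℂ) * rot angA u + (b : ℂ) * rot (-angA) u +
      (c : ℂ) * rot angB u + (d : ℂ) * rot (-angB) u := by
  refine ⟨1, 1, 1, 1, ?_⟩
  unfold rot
  have key : Complex.exp (angA * Complex.I) + Complex.exp (-angA * Complex.I) +
      Complex.exp (angB * Complex.I) + Complex.exp (-angB * Complex.I) = 1 := by
    have hA : Complex.exp (angA * Complex.I) + Complex.exp (-angA * Complex.I)
        = 2 * Complex.cos angA := by
      rw [Complex.cos]; push_cast; ring_nf
    have hB : Complex.exp (angB * Complex.I) + Complex.exp (-angB * Complex.I)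
        = 2 * Complex.cos angB := by
      rw [Complex.cos]; push_cast; ring_nf
    have : (Real.cos angA : ℂ) + Real.cos angB = 1 / 2 := by
      rw [← Complex.ofReal_add, cos_sum]; norm_num
    rw [← Complex.ofReal_cos] at hA hB
    linear_combination hA + hB + 2 * this
  push_cast
  linear_combination -u * key
end

section
/- For every vertex v₁ of V_M and every vertex w of the Moser spindle, there exist vertices v₂,…,v₇ of V_M such that the induced subgraph on {v₁,…,v₇} is isomorphic to the Moser spindle via an isomorphism sending v₁ to w. -/
def MoserSpindle : SimpleGraph (Fin 7) :=
  SimpleGraph.fromRel (fun i j => (i, j) ∈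
    ([(0,1),(0,2),(1,2),(1,3),(2,3),(0,4),(0,5),(4,5),(4,6),(5,6),(3,6)] : List (Fin 7 × Fin 7)))

noncomputable def Mset (u : ℂ) : Set ℂ :=
  {u, rot angA u, rot (-angA) u, rot angB u, rot (-angB) u,
   rot angA u - rot angB u, rot (-angA) u - rot (-angB) u}

noncomputable def VM (u : ℂ) : SimpleGraph (Submodule.span ℤ (Mset u)) :=
  SimpleGraph.fromRel (fun x y => (x : ℂ) - (y : ℂ) ∈ Mset u)

open Real

lemma cos_arccos_one_div_two_mul_sqrt_three : cos (arccos (1 / (2 * √3))) = 1 / (2 * √3) := by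
  have h : (1 : ℝ) ≤ √3 := one_le_sqrt.mpr (by norm_num)
  refine cos_arccos (by linarith [show 0 ≤ 1 / (2 * √3) by positivity]) ?_
  rw [div_le_one (by positivity)]
  linarith

lemma angB_eq : angB = arccos (1 / (2 * √3)) + π / 6 := by
  rw [angB, angA]; ring

lemma cos_angA_add_cos_angB : cos angA + cos angB = 1 / 2 := by
  rw [angB_eq, angA, cos_sub, cos_add, cos_pi_div_six, sin_pi_div_six,
    cos_arccos_one_div_two_mul_sqrt_three]
  field_simp
  ring

lemma cos_angA_mul_cos_angB_sub_sin_mul_sin :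
    cos angA * cos angB - sin angA * sin angB = -5 / 6 := by
  rw [← cos_add, show angA + angB = 2 * arccos (1 / (2 * √3)) by rw [angB_eq, angA]; ring,
    cos_two_mul, cos_arccos_one_div_two_mul_sqrt_three]
  have : √3 ^ 2 = 3 := sq_sqrt (by norm_num)
  field_simp
  linarith

lemma cos_angA_mul_cos_angB_add_sin_mul_sin :
    cos angA * cos angB + sin angA * sin angB = 1 / 2 := by
  rw [mul_comm (cos angA), mul_comm (sin angA), ← cos_sub,
    show angB - angA = π / 3 by rw [angB]; ring, cos_pi_div_three]

lemma cos_angA_mul_cos_angB : cos angA * cos angB = -1 / 6 := by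
  linarith [cos_angA_mul_cos_angB_add_sin_mul_sin, cos_angA_mul_cos_angB_sub_sin_mul_sin]

@[simp] lemma rot_one_re (θ : ℝ) : (rot θ 1).re = cos θ := by
  simp [rot, Complex.exp_ofReal_mul_I_re]

@[simp] lemma rot_one_im (θ : ℝ) : (rot θ 1).im = sin θ := by
  simp [rot, Complex.exp_ofReal_mul_I_im]

lemma norm_rot_one (θ : ℝ) : ‖rot θ 1‖ = 1 := by
  rw [rot, mul_one, Complex.norm_exp_ofReal_mul_I]

lemma Mset_eq_image (u : ℂ) : Mset u = (· * u) '' Mset 1 := by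
  simp [Mset, rot, Set.image_insert_eq, sub_mul]

lemma norm_rot_one_sub_rot_one {θ θ' : ℝ} (h : cos θ * cos θ' + sin θ * sin θ' = 1 / 2) :
    ‖rot θ 1 - rot θ' 1‖ = 1 := by
  rw [← Real.sqrt_one, Complex.norm_def, Complex.normSq_apply]
  congr 1
  simp only [Complex.sub_re, Complex.sub_im, rot_one_re, rot_one_im]
  linear_combination sin_sq_add_cos_sq θ + sin_sq_add_cos_sq θ' - 2 * h

lemma norm_of_mem_Mset_one {z : ℂ} (hz : z ∈ Mset 1) : ‖z‖ = 1 := by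
  simp only [Mset, Set.mem_insert_iff, Set.mem_singleton_iff] at hz
  rcases hz with rfl | rfl | rfl | rfl | rfl | rfl | rfl
  · exact norm_one
  any_goals exact norm_rot_one _
  · exact norm_rot_one_sub_rot_one cos_angA_mul_cos_angB_add_sin_mul_sin
  · exact norm_rot_one_sub_rot_one (by simpa using cos_angA_mul_cos_angB_add_sin_mul_sin)

lemma norm_of_mem_Mset {u z : ℂ} (hz : z ∈ Mset u) : ‖z‖ = ‖u‖ := by
  rw [Mset_eq_image] at hz
  obtain ⟨m, hm, rfl⟩ := hz
  rw [norm_mul, norm_of_mem_Mset_one hm, one_mul]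

lemma mul_mem_Mset {u z : ℂ} (hz : z ∈ Mset 1) : z * u ∈ Mset u := by
  rw [Mset_eq_image]
  exact Set.mem_image_of_mem _ hz

lemma norm_eq_one_of_mul_mem_Mset {u z : ℂ} (hu : u ≠ 0) (hz : z * u ∈ Mset u) :
    ‖z‖ = 1 := by
  have h := norm_of_mem_Mset hz
  rwa [norm_mul, mul_eq_right₀ (norm_ne_zero_iff.mpr hu)] at h

lemma mul_mem_span_Mset {u z : ℂ} (hz : z ∈ Submodule.span ℤ (Mset 1)) :
    z * u ∈ Submodule.span ℤ (Mset u) := by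
  rw [Mset_eq_image, show (· * u) = ⇑(LinearMap.mulRight ℤ u) from rfl, Submodule.span_image]
  exact Submodule.mem_map_of_mem hz

lemma VM_adj_iff {u : ℂ} (hu : u ≠ 0) {x y : Submodule.span ℤ (Mset u)} :
    (VM u).Adj x y ↔ (x : ℂ) - y ∈ Mset u ∨ (y : ℂ) - x ∈ Mset u := by
  refine (SimpleGraph.fromRel_adj _ _ _).trans (and_iff_right_of_imp ?_)
  rintro h rfl
  simp only [sub_self, or_self] at h
  simpa [eq_comm, hu] using norm_of_mem_Mset h

def VM.translation (u : ℂ) (v : Submodule.span ℤ (Mset u)) : VM u ≃g VM u where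
  toEquiv := Equiv.addRight v
  map_rel_iff' := by simp [VM]

noncomputable def spindlePt : Fin 7 → ℂ :=
  ![0, rot angA 1, rot angB 1, rot angA 1 + rot angB 1,
    -rot (-angA) 1, -rot (-angB) 1, -rot (-angA) 1 - rot (-angB) 1]

lemma rot_add_rot_add_rot_neg_add_rot_neg :
    rot angA 1 + rot angB 1 + (rot (-angA) 1 + rot (-angB) 1) = 1 := by
  apply Complex.ext <;> simp
  · linarith [cos_angA_add_cos_angB]
  · ring

lemma spindlePt_sub_mem_Mset_of_adj {i j : Fin 7} (h : MoserSpindle.Adj i j) :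
    spindlePt i - spindlePt j ∈ Mset 1 ∨ spindlePt j - spindlePt i ∈ Mset 1 := by
  wlog hij : i < j generalizing i j
  · exact (this h.symm (lt_of_le_of_ne (not_lt.1 hij) h.ne.symm)).symm
  fin_cases i <;> fin_cases j <;> simp [MoserSpindle] at h hij
  all_goals simp only [spindlePt, Mset, Set.mem_insert_iff, Set.mem_singleton_iff]; abel_nf
  all_goals simp [rot_add_rot_add_rot_neg_add_rot_neg]

lemma normSq_spindlePt_sub_mem_of_not_adj {i j : Fin 7} (hij : i ≠ j)
    (h : ¬ MoserSpindle.Adj i j) :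
    Complex.normSq (spindlePt i - spindlePt j) ∈
      ({3, 1 / 3, 4 * cos angA ^ 2, 4 * cos angB ^ 2, 2 * cos angA + 1, 2 * cos angB + 1} :
        Set ℝ) := by
  have hA := sin_sq_add_cos_sq angA
  have hB := sin_sq_add_cos_sq angB
  have hsum := cos_angA_add_cos_angB
  have hdiff := cos_angA_mul_cos_angB_add_sin_mul_sin
  have hadd := cos_angA_mul_cos_angB_sub_sin_mul_sin
  fin_cases i <;> fin_cases j <;> simp [MoserSpindle] at hij h <;>
    simp [spindlePt, Complex.normSq_apply] <;> grind

lemma normSq_spindlePt_sub_ne_of_not_adj {i j : Fin 7} (hij : i ≠ j)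
    (h : ¬ MoserSpindle.Adj i j) :
    Complex.normSq (spindlePt i - spindlePt j) ≠ 0 ∧
      Complex.normSq (spindlePt i - spindlePt j) ≠ 1 := by
  have hA : 6 * cos angA ^ 2 - 3 * cos angA - 1 = 0 := by
    linear_combination 6 * cos angA * cos_angA_add_cos_angB - 6 * cos_angA_mul_cos_angB
  have hB : 6 * cos angB ^ 2 - 3 * cos angB - 1 = 0 := by
    linear_combination 6 * cos angB * cos_angA_add_cos_angB - 6 * cos_angA_mul_cos_angB
  have hv := normSq_spindlePt_sub_mem_of_not_adj hij h
  simp only [Set.mem_insert_iff, Set.mem_singleton_iff] at hv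
  rcases hv with hv | hv | hv | hv | hv | hv <;> rw [hv] <;> constructor <;> intro h' <;> nlinarith

lemma spindlePt_injective : Function.Injective spindlePt := by
  intro i j h
  by_contra hij
  by_cases hadj : MoserSpindle.Adj i j
  · have := spindlePt_sub_mem_Mset_of_adj hadj
    simp only [h, sub_self, or_self] at this
    simpa using norm_of_mem_Mset_one this
  · simpa [h] using (normSq_spindlePt_sub_ne_of_not_adj hij hadj).1

lemma adj_of_norm_spindlePt_sub_eq_one {i j : Fin 7} (h : ‖spindlePt i - spindlePt j‖ = 1) :
    MoserSpindle.Adj i j := by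
  by_contra hadj
  have hij : i ≠ j := by rintro rfl; simp at h
  apply (normSq_spindlePt_sub_ne_of_not_adj hij hadj).2
  rw [Complex.normSq_eq_norm_sq, h, one_pow]

lemma spindlePt_mem_span (i : Fin 7) : spindlePt i ∈ Submodule.span ℤ (Mset 1) := by
  fin_cases i <;> simp [spindlePt]
  any_goals apply_rules [add_mem, neg_mem, sub_mem]
  all_goals exact Submodule.subset_span (by simp [Mset])

noncomputable def spindleEmbedding {u : ℂ} (hu : u ≠ 0) : MoserSpindle ↪g VM u where
  toFun i := ⟨spindlePt i * u, mul_mem_span_Mset (spindlePt_mem_span i)⟩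
  inj' _ _ h := spindlePt_injective <| mul_right_cancel₀ hu <| Subtype.ext_iff.mp h
  map_rel_iff' {i j} := by
    rw [VM_adj_iff hu]
    show (spindlePt i * u - spindlePt j * u ∈ Mset u ∨
      spindlePt j * u - spindlePt i * u ∈ Mset u) ↔ _
    simp only [← sub_mul]
    refine ⟨fun h => adj_of_norm_spindlePt_sub_eq_one ?_,
      fun h => (spindlePt_sub_mem_Mset_of_adj h).imp mul_mem_Mset mul_mem_Mset⟩
    rcases h with h | h
    · exact norm_eq_one_of_mul_mem_Mset hu h
    · rw [norm_sub_rev]; exact norm_eq_one_of_mul_mem_Mset hu h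

theorem stmt12 (u : ℂ) (hu : ‖u‖ = 1) (v₁ : Submodule.span ℤ (Mset u)) (w : Fin 7) :
    ∃ φ : MoserSpindle ↪g VM u, φ w = v₁ := by
  let φ := spindleEmbedding (u := u) (by rintro rfl; simp at hu)
  exact ⟨φ.trans (VM.translation u (v₁ - φ w)).toEmbedding, by simp [VM.translation]⟩
end

section
/- The chromatic number of the Euclidean plane unit-distance graph is at least 4: there is no proper 3-coloring of the graph with vertex set ℝ² and edges between points at distance 1. -/
noncomputable def Plane : SimpleGraph ℂ := SimpleGraph.fromRel (fun x y => dist x y = 1)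

lemma fin3_aux : ∀ (a b u v : Fin 3), a ≠ b → u ≠ a → u ≠ b → v ≠ a → v ≠ b → u = v := by decide

lemma dist_of_normSq (x y : ℂ) (r : ℝ) (hr : 0 ≤ r)
    (h : Complex.normSq (x - y) = r ^ 2) : dist x y = r := by
  rw [Complex.dist_eq, Complex.norm_def, h, Real.sqrt_sq hr]

theorem stmt18 : ¬ Plane.Colorable 3 := by
  rintro ⟨c⟩
  have key : ∀ x y : ℂ, dist x y = 1 → c x ≠ c y := by
    intro x y h
    apply c.valid
    have hne : x ≠ y := by
      rintro rfl; simp at h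
    exact ⟨hne, Or.inl h⟩
  set s : ℝ := Real.sqrt 3 with hs
  have hs2 : s ^ 2 = 3 := Real.sq_sqrt (by norm_num)
  have hspos : 0 < s := Real.sqrt_pos.mpr (by norm_num)
  have hsne : s ≠ 0 := hspos.ne'
  have same : ∀ x y : ℂ, dist x y = s → c x = c y := by
    intro x y hxy
    set t : ℝ := 1 / (2 * s) with ht
    have ht2 : t ^ 2 = 1 / 12 := by
      rw [ht, div_pow, mul_pow, hs2]; norm_num
    have hu : Complex.normSq (y - x) = 3 := by
      rw [show y - x = -(x - y) by ring, Complex.normSq_neg, ← Complex.sq_norm,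
        ← Complex.dist_eq, hxy, hs2]
    set k : ℂ := ((1/2 : ℝ) : ℂ) + (t : ℂ) * Complex.I with hk
    set k' : ℂ := ((1/2 : ℝ) : ℂ) - (t : ℂ) * Complex.I with hk'
    set p : ℂ := x + (y - x) * k with hp
    set q : ℂ := x + (y - x) * k' with hq
    have hnk : Complex.normSq k = 1 / 3 := by
      rw [hk, Complex.normSq_add_mul_I, ht2]; norm_num
    have hnk1 : Complex.normSq (k - 1) = 1 / 3 := by
      have : k - 1 = ((-(1/2) : ℝ) : ℂ) + (t : ℂ) * Complex.I := by
        rw [hk]; push_cast; ring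
      rw [this, Complex.normSq_add_mul_I]; simp only [neg_sq]; rw [ht2]; norm_num
    have hnk' : Complex.normSq k' = 1 / 3 := by
      have : k' = ((1/2 : ℝ) : ℂ) + ((-t : ℝ) : ℂ) * Complex.I := by
        rw [hk']; push_cast; ring
      rw [this, Complex.normSq_add_mul_I]; simp only [neg_sq]; rw [ht2]; norm_num
    have hnk'1 : Complex.normSq (k' - 1) = 1 / 3 := by
      have : k' - 1 = ((-(1/2) : ℝ) : ℂ) + ((-t : ℝ) : ℂ) * Complex.I := by
        rw [hk']; push_cast; ring
      rw [this, Complex.normSq_add_mul_I]; simp only [neg_sq]; rw [ht2]; norm_num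
    have hnkk : Complex.normSq (k - k') = 1 / 3 := by
      have : k - k' = ((0 : ℝ) : ℂ) + ((2*t : ℝ) : ℂ) * Complex.I := by
        rw [hk, hk']; push_cast; ring
      rw [this, Complex.normSq_add_mul_I]; nlinarith [ht2]
    have dpx : dist p x = 1 := by
      apply dist_of_normSq _ _ _ (by norm_num)
      have : p - x = (y - x) * k := by rw [hp]; ring
      rw [this, Complex.normSq_mul, hu, hnk]; norm_num
    have dpy : dist p y = 1 := by
      apply dist_of_normSq _ _ _ (by norm_num)
      have : p - y = (y - x) * (k - 1) := by rw [hp]; ring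
      rw [this, Complex.normSq_mul, hu, hnk1]; norm_num
    have dqx : dist q x = 1 := by
      apply dist_of_normSq _ _ _ (by norm_num)
      have : q - x = (y - x) * k' := by rw [hq]; ring
      rw [this, Complex.normSq_mul, hu, hnk']; norm_num
    have dqy : dist q y = 1 := by
      apply dist_of_normSq _ _ _ (by norm_num)
      have : q - y = (y - x) * (k' - 1) := by rw [hq]; ring
      rw [this, Complex.normSq_mul, hu, hnk'1]; norm_num
    have dpq : dist p q = 1 := by
      apply dist_of_normSq _ _ _ (by norm_num)
      have : p - q = (y - x) * (k - k') := by rw [hp, hq]; ring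
      rw [this, Complex.normSq_mul, hu, hnkk]; norm_num
    exact fin3_aux (c p) (c q) (c x) (c y) (key p q dpq)
      (fun h => key p x dpx h.symm) (fun h => key q x dqx h.symm)
      (fun h => key p y dpy h.symm) (fun h => key q y dqy h.symm)
  -- final contradiction with three specific points
  set b : ℝ := Real.sqrt (11/12) with hb
  have hb2 : b ^ 2 = 11/12 := Real.sq_sqrt (by norm_num)
  set z : ℂ := ((5/(2*s) : ℝ) : ℂ) + (b : ℂ) * Complex.I with hz
  have h1 : dist (0 : ℂ) ((s : ℝ) : ℂ) = s := by
    apply dist_of_normSq _ _ _ hspos.le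
    have : (0 : ℂ) - ((s : ℝ) : ℂ) = ((-s : ℝ) : ℂ) + ((0 : ℝ) : ℂ) * Complex.I := by
      push_cast; ring
    rw [this, Complex.normSq_add_mul_I]; ring
  have h2 : dist (0 : ℂ) z = s := by
    apply dist_of_normSq _ _ _ hspos.le
    have : (0 : ℂ) - z = ((-(5/(2*s)) : ℝ) : ℂ) + ((-b : ℝ) : ℂ) * Complex.I := by
      rw [hz]; push_cast; ring
    rw [this, Complex.normSq_add_mul_I]
    field_simp
    nlinarith [hs2, hb2]
  have h3 : dist ((s : ℝ) : ℂ) z = 1 := by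
    apply dist_of_normSq _ _ _ (by norm_num)
    have : ((s : ℝ) : ℂ) - z = ((s - 5/(2*s) : ℝ) : ℂ) + ((-b : ℝ) : ℂ) * Complex.I := by
      rw [hz]; push_cast; ring
    rw [this, Complex.normSq_add_mul_I]
    field_simp
    nlinarith [hs2, hb2]
  exact key _ _ h3 ((same 0 _ h1).symm.trans (same 0 z h2))
end
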